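/- arXiv:2002.06880 — 4 statements merged into one kernel-verified Lean document; each statement's English description precedes it below -/
import Mathlib

section
/- (Cartan, 1924; direct-sum part of the classification of metric torsion tensors.) Let V be a finite-dimensional real inner product space with dim V ≥ 3. Then 𝒯(V) is the internal direct sum of the subspaces 𝒯₁(V), 𝒯₂(V) and 𝒯₃(V): every A ∈ 𝒯(V) can be written as A = A₁ + A₂ + A₃ with Aᵢ ∈ 𝒯ᵢ(V) (i = 1,2,3), and this decomposition is unique. -/
/-! The cyclic sum `A(X,Y,Z) + A(Y,Z,X) + A(Z,X,Y)` kills `𝒯₁` and `𝒯₃` and is multiplication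
by `3` on `𝒯₂`, while the contraction `c₁₂` kills `𝒯₂` and `𝒯₃` and sends the vectorial torsion
of `v` to `(n - 1)⟪v, ·⟫`, where `n = dim V`. Hence a third of the cyclic sum of `A` is its
`𝒯₂`-part, the vector `v` with `(n - 1)⟪v, ·⟫ = c₁₂(A)` gives its `𝒯₁`-part and the rest lies
in `𝒯₃`; the same two maps show that three components summing to zero all vanish. -/

open scoped RealInnerProductSpace BigOperators

variable {V : Type*} [NormedAddCommGroup V] [InnerProductSpace ℝ V] [FiniteDimensional ℝ V]

/-- The space `𝒯(V)` of algebraic torsion tensors: trilinear forms that are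
antisymmetric in the last two arguments. -/
def IsTorsionTensor (A : V →ₗ[ℝ] V →ₗ[ℝ] V →ₗ[ℝ] ℝ) : Prop :=
  ∀ X Y Z : V, A X Y Z = - A X Z Y

/-- `𝒯₁(V)`: vectorial torsion tensors. -/
def IsVectorialTorsion (A : V →ₗ[ℝ] V →ₗ[ℝ] V →ₗ[ℝ] ℝ) : Prop :=
  IsTorsionTensor A ∧
    ∃ v : V, ∀ X Y Z : V, A X Y Z = ⟪X, Y⟫ * ⟪v, Z⟫ - ⟪X, Z⟫ * ⟪v, Y⟫

/-- `𝒯₂(V)`: totally antisymmetric torsion tensors. -/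
def IsTotallyAntisymmetricTorsion (A : V →ₗ[ℝ] V →ₗ[ℝ] V →ₗ[ℝ] ℝ) : Prop :=
  IsTorsionTensor A ∧ ∀ X Y Z : V, A X Y Z = - A Y X Z

/-- The contraction `c₁₂(A)(Z) = ∑ᵢ A(eᵢ, eᵢ, Z)` over an orthonormal basis. -/
noncomputable def c12 (A : V →ₗ[ℝ] V →ₗ[ℝ] V →ₗ[ℝ] ℝ) (Z : V) : ℝ :=
  ∑ i, A (stdOrthonormalBasis ℝ V i) (stdOrthonormalBasis ℝ V i) Z

/-- `𝒯₃(V)`: torsion tensors of Cartan type. -/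
def IsCartanTorsion (A : V →ₗ[ℝ] V →ₗ[ℝ] V →ₗ[ℝ] ℝ) : Prop :=
  IsTorsionTensor A ∧ (∀ X Y Z : V, A X Y Z + A Y Z X + A Z X Y = 0) ∧
    ∀ Z : V, c12 A Z = 0

section

variable {V : Type*} [NormedAddCommGroup V] [InnerProductSpace ℝ V]

local notation "𝕋" => V →ₗ[ℝ] V →ₗ[ℝ] V →ₗ[ℝ] ℝ

/- Instance search does not find this group structure: it would have to solve
`AddCommGroup.toAddCommMonoid ?G =?= LinearMap.addCommMonoid` for the codomain
`V →ₗ[ℝ] V →ₗ[ℝ] ℝ`. -/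
noncomputable instance : AddCommGroup 𝕋 :=
  @LinearMap.addCommGroup ℝ ℝ V (V →ₗ[ℝ] V →ₗ[ℝ] ℝ) _ _ _ LinearMap.addCommGroup _ _ (RingHom.id ℝ)

@[simp]
lemma trilinear_sub_apply (A B : 𝕋) (X : V) : (A - B) X = A X - B X := rfl

lemma IsTorsionTensor.sub {A B : 𝕋} (hA : IsTorsionTensor A) (hB : IsTorsionTensor B) :
    IsTorsionTensor (A - B) := fun X Y Z => by
  simp only [trilinear_sub_apply, LinearMap.sub_apply, hA X Y Z, hB X Y Z]; ring

lemma IsTotallyAntisymmetricTorsion.sub {A B : 𝕋} (hA : IsTotallyAntisymmetricTorsion A)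
    (hB : IsTotallyAntisymmetricTorsion B) : IsTotallyAntisymmetricTorsion (A - B) :=
  ⟨hA.1.sub hB.1, fun X Y Z => by
    simp only [trilinear_sub_apply, LinearMap.sub_apply, hA.2 X Y Z, hB.2 X Y Z]; ring⟩

lemma IsTotallyAntisymmetricTorsion.smul {A : 𝕋} (hA : IsTotallyAntisymmetricTorsion A) (c : ℝ) :
    IsTotallyAntisymmetricTorsion (c • A) :=
  ⟨fun X Y Z => by simp [hA.1 X Y Z], fun X Y Z => by simp [hA.2 X Y Z]⟩

noncomputable def vectorialTorsion (v : V) : 𝕋 :=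
  (LinearMap.smulRightₗ.flip (innerₗ V v)).comp (innerₗ V) -
    (LinearMap.smulRightₗ (innerₗ V v)).comp (innerₗ V)

@[simp]
lemma vectorialTorsion_apply (v X Y Z : V) :
    vectorialTorsion v X Y Z = ⟪X, Y⟫ * ⟪v, Z⟫ - ⟪X, Z⟫ * ⟪v, Y⟫ := by
  simp [vectorialTorsion, mul_comm]

@[simp]
lemma vectorialTorsion_zero : vectorialTorsion (0 : V) = 0 := by
  ext; simp

lemma isVectorialTorsion_vectorialTorsion (v : V) : IsVectorialTorsion (vectorialTorsion v) :=
  ⟨fun X Y Z => by simp only [vectorialTorsion_apply]; ring, v, vectorialTorsion_apply v⟩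

lemma IsVectorialTorsion.exists_eq_vectorialTorsion {A : 𝕋} (hA : IsVectorialTorsion A) :
    ∃ v, A = vectorialTorsion v := by
  obtain ⟨-, v, hv⟩ := hA
  exact ⟨v, by ext X Y Z; simp [hv]⟩

lemma IsVectorialTorsion.sub {A B : 𝕋} (hA : IsVectorialTorsion A) (hB : IsVectorialTorsion B) :
    IsVectorialTorsion (A - B) := by
  obtain ⟨v, rfl⟩ := hA.exists_eq_vectorialTorsion
  obtain ⟨w, rfl⟩ := hB.exists_eq_vectorialTorsion
  refine ⟨hA.1.sub hB.1, v - w, fun X Y Z => ?_⟩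
  simp only [trilinear_sub_apply, LinearMap.sub_apply, vectorialTorsion_apply, inner_sub_left]
  ring

noncomputable def rotateArgs (A : 𝕋) : 𝕋 := (LinearMap.lflip.comp A).flip

@[simp]
lemma rotateArgs_apply (A : 𝕋) (X Y Z : V) : rotateArgs A X Y Z = A Y Z X := rfl

noncomputable def cyclicSum : 𝕋 →ₗ[ℝ] 𝕋 where
  toFun A := A + rotateArgs A + rotateArgs (rotateArgs A)
  map_add' A B := by ext; simp only [LinearMap.add_apply, rotateArgs_apply]; ring
  map_smul' c A := by
    ext
    simp only [LinearMap.add_apply, LinearMap.smul_apply, rotateArgs_apply, RingHom.id_apply,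
      smul_eq_mul]
    ring

lemma cyclicSum_apply (A : 𝕋) (X Y Z : V) :
    cyclicSum A X Y Z = A X Y Z + A Y Z X + A Z X Y := rfl

lemma cyclicSum_eq_zero_iff {A : 𝕋} :
    cyclicSum A = 0 ↔ ∀ X Y Z : V, A X Y Z + A Y Z X + A Z X Y = 0 := by
  simp only [LinearMap.ext_iff, cyclicSum_apply, LinearMap.zero_apply]

lemma cyclicSum_vectorialTorsion (v : V) : cyclicSum (vectorialTorsion v) = 0 :=
  cyclicSum_eq_zero_iff.2 fun X Y Z => by
    simp only [vectorialTorsion_apply, real_inner_comm X Y, real_inner_comm X Z,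
      real_inner_comm Y Z]
    ring

lemma IsTotallyAntisymmetricTorsion.cyclicSum_eq {A : 𝕋} (hA : IsTotallyAntisymmetricTorsion A) :
    cyclicSum A = (3 : ℝ) • A := by
  ext X Y Z
  have h₁ := hA.2 Y Z X
  have h₂ := hA.1 Z Y X
  have h₃ := hA.2 Z X Y
  have h₄ := hA.1 X Z Y
  simp only [cyclicSum_apply, LinearMap.smul_apply, smul_eq_mul]
  linarith

lemma IsTorsionTensor.isTotallyAntisymmetricTorsion_cyclicSum {A : 𝕋} (hA : IsTorsionTensor A) :
    IsTotallyAntisymmetricTorsion (cyclicSum A) := by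
  constructor <;> intro X Y Z <;> simp only [cyclicSum_apply] <;>
    linarith [hA X Y Z, hA Y Z X, hA Z X Y, hA Y X Z, hA Z Y X, hA X Z Y]

variable [FiniteDimensional ℝ V]

lemma c12_sub (A B : 𝕋) (Z : V) : c12 (A - B) Z = c12 A Z - c12 B Z := by
  simp only [c12, trilinear_sub_apply, LinearMap.sub_apply, Finset.sum_sub_distrib]

lemma c12_add (A B : 𝕋) (Z : V) : c12 (A + B) Z = c12 A Z + c12 B Z := by
  simp only [c12, LinearMap.add_apply, Finset.sum_add_distrib]

lemma c12_smul (c : ℝ) (A : 𝕋) (Z : V) : c12 (c • A) Z = c * c12 A Z := by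
  simp only [c12, LinearMap.smul_apply, smul_eq_mul, Finset.mul_sum]

lemma exists_inner_eq_c12 (A : 𝕋) : ∃ w : V, ∀ Z, ⟪w, Z⟫ = c12 A Z := by
  let φ : V →ₗ[ℝ] ℝ := ∑ i, A (stdOrthonormalBasis ℝ V i) (stdOrthonormalBasis ℝ V i)
  refine ⟨(InnerProductSpace.toDual ℝ V).symm φ.toContinuousLinearMap, fun Z => ?_⟩
  rw [InnerProductSpace.toDual_symm_apply]
  simp [φ, c12]

lemma c12_vectorialTorsion (v Z : V) :
    c12 (vectorialTorsion v) Z = ((Module.finrank ℝ V : ℝ) - 1) * ⟪v, Z⟫ := by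
  rw [c12]
  set e := stdOrthonormalBasis ℝ V
  have hself : ∀ i, ⟪e i, e i⟫ = 1 := fun i => inner_self_eq_one_of_norm_eq_one (e.norm_eq_one i)
  have hexpand : ∑ i, ⟪e i, Z⟫ * ⟪v, e i⟫ = ⟪v, Z⟫ := by
    simpa only [mul_comm, real_inner_comm] using e.sum_inner_mul_inner v Z
  simp only [vectorialTorsion_apply, Finset.sum_sub_distrib, hself, one_mul, hexpand,
    Finset.sum_const, Finset.card_univ, Fintype.card_fin, nsmul_eq_mul]
  ring

lemma IsTorsionTensor.c12_cyclicSum {A : 𝕋} (hA : IsTorsionTensor A) (Z : V) :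
    c12 (cyclicSum A) Z = 0 := by
  refine Finset.sum_eq_zero fun i _ => ?_
  set e := stdOrthonormalBasis ℝ V
  have h₁ := hA (e i) (e i) Z
  have h₂ := hA (e i) Z (e i)
  have h₃ := hA Z (e i) (e i)
  rw [cyclicSum_apply]
  linarith

lemma IsCartanTorsion.sub {A B : 𝕋} (hA : IsCartanTorsion A) (hB : IsCartanTorsion B) :
    IsCartanTorsion (A - B) := by
  obtain ⟨hAt, hAcyc, hAc⟩ := hA
  obtain ⟨hBt, hBcyc, hBc⟩ := hB
  rw [← cyclicSum_eq_zero_iff] at hAcyc hBcyc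
  refine ⟨hAt.sub hBt, cyclicSum_eq_zero_iff.1 ?_, fun Z => ?_⟩
  · rw [map_sub, hAcyc, hBcyc, sub_zero]
  · rw [c12_sub, hAc, hBc, sub_zero]

lemma eq_zero_of_add_add_eq_zero (hn : Module.finrank ℝ V ≠ 1) {B₁ B₂ B₃ : 𝕋}
    (h₁ : IsVectorialTorsion B₁) (h₂ : IsTotallyAntisymmetricTorsion B₂)
    (h₃ : IsCartanTorsion B₃) (hsum : B₁ + B₂ + B₃ = 0) :
    B₁ = 0 ∧ B₂ = 0 ∧ B₃ = 0 := by
  obtain ⟨v, rfl⟩ := h₁.exists_eq_vectorialTorsion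
  obtain ⟨-, hcyc₃, hc₃⟩ := h₃
  have hB₂ : B₂ = 0 := by
    have hcyc := congrArg cyclicSum hsum
    rw [map_add, map_add, cyclicSum_vectorialTorsion, h₂.cyclicSum_eq,
      cyclicSum_eq_zero_iff.2 hcyc₃, map_zero] at hcyc
    simpa using hcyc
  have hv : v = 0 := by
    have hn' : (Module.finrank ℝ V : ℝ) - 1 ≠ 0 := sub_ne_zero.2 (by exact_mod_cast hn)
    refine ext_inner_right ℝ fun Z => ?_
    have hc := congrArg (c12 · Z) hsum
    simp only [c12_add, c12_vectorialTorsion, hB₂, hc₃] at hc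
    simpa [c12, hn'] using hc
  subst hB₂ hv
  exact ⟨vectorialTorsion_zero, rfl, by simpa using hsum⟩

lemma exists_torsion_decomposition (hn : Module.finrank ℝ V ≠ 1) {A : 𝕋}
    (hA : IsTorsionTensor A) :
    ∃ B₁ B₂ B₃ : 𝕋, IsVectorialTorsion B₁ ∧ IsTotallyAntisymmetricTorsion B₂ ∧
      IsCartanTorsion B₃ ∧ A = B₁ + B₂ + B₃ := by
  obtain ⟨w, hw⟩ := exists_inner_eq_c12 A
  have hn' : (Module.finrank ℝ V : ℝ) - 1 ≠ 0 := sub_ne_zero.2 (by exact_mod_cast hn)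
  set B₁ := vectorialTorsion (((Module.finrank ℝ V : ℝ) - 1)⁻¹ • w)
  have h₂ := hA.isTotallyAntisymmetricTorsion_cyclicSum.smul (3 : ℝ)⁻¹
  set B₂ := (3 : ℝ)⁻¹ • cyclicSum A
  refine ⟨B₁, B₂, A - B₁ - B₂, isVectorialTorsion_vectorialTorsion _, h₂, ⟨?_, ?_, ?_⟩, by abel⟩
  · exact (hA.sub (isVectorialTorsion_vectorialTorsion _).1).sub h₂.1
  · rw [← cyclicSum_eq_zero_iff, map_sub, map_sub, cyclicSum_vectorialTorsion, h₂.cyclicSum_eq]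
    module
  · intro Z
    rw [c12_sub, c12_sub, c12_vectorialTorsion, c12_smul, hA.c12_cyclicSum, real_inner_smul_left,
      hw, mul_inv_cancel_left₀ hn']
    ring

end

/-- Cartan (1924), direct-sum part: for `dim V ≥ 3`, every torsion tensor decomposes
uniquely as a sum of a vectorial, a totally antisymmetric and a Cartan-type torsion
tensor. -/
theorem cartan_direct_sum_decomposition
    (hdim : 3 ≤ Module.finrank ℝ V)
    (A : V →ₗ[ℝ] V →ₗ[ℝ] V →ₗ[ℝ] ℝ) (hA : IsTorsionTensor A) :
    ∃! p : (V →ₗ[ℝ] V →ₗ[ℝ] V →ₗ[ℝ] ℝ) × (V →ₗ[ℝ] V →ₗ[ℝ] V →ₗ[ℝ] ℝ) ×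
        (V →ₗ[ℝ] V →ₗ[ℝ] V →ₗ[ℝ] ℝ),
      IsVectorialTorsion p.1 ∧ IsTotallyAntisymmetricTorsion p.2.1 ∧
        IsCartanTorsion p.2.2 ∧ A = p.1 + p.2.1 + p.2.2 := by
  have hn : Module.finrank ℝ V ≠ 1 := by omega
  obtain ⟨B₁, B₂, B₃, h₁, h₂, h₃, rfl⟩ := exists_torsion_decomposition hn hA
  refine ⟨(B₁, B₂, B₃), ⟨h₁, h₂, h₃, rfl⟩, ?_⟩
  rintro ⟨C₁, C₂, C₃⟩ ⟨hC₁, hC₂, hC₃, hC⟩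
  obtain ⟨e₁, e₂, e₃⟩ := eq_zero_of_add_add_eq_zero hn (hC₁.sub h₁) (hC₂.sub h₂) (hC₃.sub h₃)
    (by rw [← sub_eq_zero.2 hC.symm]; abel)
  rw [sub_eq_zero] at e₁ e₂ e₃
  exact Prod.ext e₁ (Prod.ext e₂ e₃)
end

section
/- (Cartan, 1924; orthogonality part of the classification of metric torsion tensors.) Let V be a finite-dimensional real inner product space with dim V ≥ 3. Then the three subspaces 𝒯₁(V), 𝒯₂(V), 𝒯₃(V) of 𝒯(V) are pairwise orthogonal with respect to the natural inner product on trilinear forms: if A ∈ 𝒯ᵢ(V) and B ∈ 𝒯ⱼ(V) with i ≠ j (i,j ∈ {1,2,3}), then ⟨A,B⟩ = ∑_{i,j,k} A(eᵢ,eⱼ,e_k) B(eᵢ,eⱼ,e_k) = 0, where (eᵢ) is an orthonormal basis of V. -/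
open scoped RealInnerProductSpace BigOperators

variable {V : Type*} [NormedAddCommGroup V] [InnerProductSpace ℝ V] [FiniteDimensional ℝ V]

/-- The three distinguished classes of torsion tensors, indexed by `Fin 3`. -/
noncomputable def TorsionClass (V : Type*) [NormedAddCommGroup V] [InnerProductSpace ℝ V]
    [FiniteDimensional ℝ V] : Fin 3 → ((V →ₗ[ℝ] V →ₗ[ℝ] V →ₗ[ℝ] ℝ) → Prop) :=
  ![IsVectorialTorsion, IsTotallyAntisymmetricTorsion, IsCartanTorsion]

lemma sum_diag_eq_c12 {ι : Type*} [Fintype ι] (B : V →ₗ[ℝ] V →ₗ[ℝ] V →ₗ[ℝ] ℝ)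
    (b : OrthonormalBasis ι ℝ V) (Z : V) :
    ∑ k, B (b k) (b k) Z = c12 B Z := by
  classical
  set e := stdOrthonormalBasis ℝ V with he
  have hexp : ∀ k, B (b k) (b k) Z
      = ∑ m, ∑ n, ⟪e m, b k⟫ * ⟪e n, b k⟫ * B (e m) (e n) Z := by
    intro k
    conv_lhs => rw [← e.sum_repr' (b k)]
    simp only [map_sum, map_smul, LinearMap.sum_apply, LinearMap.smul_apply, smul_eq_mul,
      Finset.mul_sum, Finset.sum_mul]
    rw [Finset.sum_comm]
    exact Finset.sum_congr rfl fun m _ => Finset.sum_congr rfl fun n _ => by ring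
  have h2 : ∀ m n, ∑ k, ⟪e m, b k⟫ * ⟪e n, b k⟫ = if m = n then (1:ℝ) else 0 := by
    intro m n
    have h := b.sum_inner_mul_inner (e m) (e n)
    calc ∑ k, ⟪e m, b k⟫ * ⟪e n, b k⟫ = ∑ k, ⟪e m, b k⟫ * ⟪b k, e n⟫ := by
          exact Finset.sum_congr rfl fun k _ => by rw [real_inner_comm (e n) (b k)]
      _ = ⟪e m, e n⟫ := h
      _ = if m = n then 1 else 0 := orthonormal_iff_ite.mp e.orthonormal m n
  calc ∑ k, B (b k) (b k) Z
      = ∑ k, ∑ m, ∑ n, ⟪e m, b k⟫ * ⟪e n, b k⟫ * B (e m) (e n) Z :=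
        Finset.sum_congr rfl fun k _ => hexp k
    _ = ∑ m, ∑ n, (∑ k, ⟪e m, b k⟫ * ⟪e n, b k⟫) * B (e m) (e n) Z := by
        rw [Finset.sum_comm]
        refine Finset.sum_congr rfl fun m _ => ?_
        rw [Finset.sum_comm]
        refine Finset.sum_congr rfl fun n _ => ?_
        rw [Finset.sum_mul]
    _ = ∑ m, B (e m) (e m) Z := by
        simp [h2, ite_mul]
    _ = c12 B Z := rfl

section Ortho
variable {ι : Type*} [Fintype ι] (b : OrthonormalBasis ι ℝ V)
variable (A B : V →ₗ[ℝ] V →ₗ[ℝ] V →ₗ[ℝ] ℝ)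

lemma inner_b [DecidableEq ι] (k l : ι) : ⟪b k, b l⟫ = if k = l then (1:ℝ) else 0 :=
  orthonormal_iff_ite.mp b.orthonormal k l

lemma ortho12 (v : V) (hv : ∀ X Y Z : V, A X Y Z = ⟪X, Y⟫ * ⟪v, Z⟫ - ⟪X, Z⟫ * ⟪v, Y⟫)
    (hB1 : ∀ X Y Z : V, B X Y Z = - B X Z Y) (hB2 : ∀ X Y Z : V, B X Y Z = - B Y X Z) :
    ∑ k, ∑ l, ∑ r, A (b k) (b l) (b r) * B (b k) (b l) (b r) = 0 := by
  classical
  have hdiag1 : ∀ k r : ι, B (b k) (b k) (b r) = 0 := fun k r => by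
    have := hB2 (b k) (b k) (b r); linarith
  have hdiag2 : ∀ k l : ι, B (b k) (b l) (b k) = 0 := fun k l => by
    have h1 := hB1 (b k) (b l) (b k)
    have h2 : B (b k) (b k) (b l) = 0 := hdiag1 k l
    linarith
  simp only [hv, inner_b, sub_mul, ite_mul, one_mul, zero_mul]
  simp [Finset.sum_ite_eq, Finset.sum_ite_eq', hdiag1, hdiag2, Finset.sum_sub_distrib]

lemma ortho13 (v : V) (hv : ∀ X Y Z : V, A X Y Z = ⟪X, Y⟫ * ⟪v, Z⟫ - ⟪X, Z⟫ * ⟪v, Y⟫)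
    (hB1 : ∀ X Y Z : V, B X Y Z = - B X Z Y) (hc : ∀ Z : V, c12 B Z = 0) :
    ∑ k, ∑ l, ∑ r, A (b k) (b l) (b r) * B (b k) (b l) (b r) = 0 := by
  classical
  have hd : ∀ Z : V, ∑ k, B (b k) (b k) Z = 0 := fun Z => by
    rw [sum_diag_eq_c12]; exact hc Z
  have hd2 : ∀ l : ι, ∑ k, B (b k) (b l) (b k) = 0 := fun l => by
    have : ∀ k, B (b k) (b l) (b k) = - B (b k) (b k) (b l) := fun k => hB1 _ _ _
    simp only [this, Finset.sum_neg_distrib]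
    rw [hd (b l)]; ring
  simp only [hv, inner_b, sub_mul, ite_mul, one_mul, zero_mul]
  simp only [Finset.sum_sub_distrib, Finset.sum_ite_eq, Finset.sum_ite_eq', Finset.mem_univ,
    if_true]
  have h1 : (∑ x : ι, ∑ y : ι, ∑ z : ι,
      if x = y then ⟪v, b z⟫ * B (b x) (b y) (b z) else 0)
      = ∑ x : ι, ∑ z : ι, ⟪v, b z⟫ * B (b x) (b x) (b z) := by
    refine Finset.sum_congr rfl fun x _ => ?_
    rw [Finset.sum_comm]
    simp
  rw [h1]
  have h2 : (∑ x : ι, ∑ z : ι, ⟪v, b z⟫ * B (b x) (b x) (b z)) = 0 := by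
    rw [Finset.sum_comm]
    have : ∀ z : ι, ∑ x : ι, ⟪v, b z⟫ * B (b x) (b x) (b z) = 0 := fun z => by
      rw [← Finset.mul_sum, hd (b z), mul_zero]
    simp [this]
  have h3 : (∑ x : ι, ∑ y : ι, ⟪v, b y⟫ * B (b x) (b y) (b x)) = 0 := by
    rw [Finset.sum_comm]
    have : ∀ y : ι, ∑ x : ι, ⟪v, b y⟫ * B (b x) (b y) (b x) = 0 := fun y => by
      rw [← Finset.mul_sum, hd2 y, mul_zero]
    simp [this]
  rw [h2, h3, sub_zero]


lemma sum_rot (f : ι → ι → ι → ℝ) :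
    ∑ k, ∑ l, ∑ r, f k l r = ∑ k, ∑ l, ∑ r, f r k l :=
  calc ∑ k, ∑ l, ∑ r, f k l r = ∑ l, ∑ k, ∑ r, f k l r := Finset.sum_comm
    _ = ∑ l, ∑ r, ∑ k, f k l r := Finset.sum_congr rfl fun l _ => Finset.sum_comm

lemma ortho23 (hA1 : ∀ X Y Z : V, A X Y Z = - A X Z Y) (hA2 : ∀ X Y Z : V, A X Y Z = - A Y X Z)
    (hBc : ∀ X Y Z : V, B X Y Z + B Y Z X + B Z X Y = 0) :
    ∑ k, ∑ l, ∑ r, A (b k) (b l) (b r) * B (b k) (b l) (b r) = 0 := by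
  have hAcyc : ∀ X Y Z : V, A X Y Z = A Y Z X := fun X Y Z => by
    have h1 := hA1 Y Z X; have h2 := hA2 X Y Z; linarith
  set S := ∑ k, ∑ l, ∑ r, A (b k) (b l) (b r) * B (b k) (b l) (b r) with hS
  have e1 : S = ∑ k, ∑ l, ∑ r, A (b k) (b l) (b r) * B (b r) (b k) (b l) := by
    rw [hS, sum_rot (fun k l r => A (b k) (b l) (b r) * B (b k) (b l) (b r))]
    exact Finset.sum_congr rfl fun k _ => Finset.sum_congr rfl fun l _ =>
      Finset.sum_congr rfl fun r _ => by rw [hAcyc (b r) (b k) (b l)]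
  have e2 : S = ∑ k, ∑ l, ∑ r, A (b k) (b l) (b r) * B (b l) (b r) (b k) := by
    rw [e1, sum_rot (fun k l r => A (b k) (b l) (b r) * B (b r) (b k) (b l))]
    exact Finset.sum_congr rfl fun k _ => Finset.sum_congr rfl fun l _ =>
      Finset.sum_congr rfl fun r _ => by rw [hAcyc (b r) (b k) (b l)]
  have e3 : S + S + S = 0 := by
    nth_rewrite 2 [e1]
    nth_rewrite 2 [e2]
    rw [hS]
    simp only [← Finset.sum_add_distrib, ← mul_add]
    have : ∀ k l r : ι, B (b k) (b l) (b r) + B (b r) (b k) (b l) + B (b l) (b r) (b k) = 0 :=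
      fun k l r => by have := hBc (b k) (b l) (b r); linarith
    simp [this]
  linarith

end Ortho

/-- Cartan (1924), orthogonality part: for `dim V ≥ 3` the subspaces `𝒯₁(V)`, `𝒯₂(V)`,
`𝒯₃(V)` are pairwise orthogonal with respect to the natural inner product
`⟨A, B⟩ = ∑_{i,j,k} A(eᵢ,eⱼ,e_k) B(eᵢ,eⱼ,e_k)` on trilinear forms. -/
theorem cartan_pairwise_orthogonal
    (hdim : 3 ≤ Module.finrank ℝ V)
    {ι : Type*} [Fintype ι] (b : OrthonormalBasis ι ℝ V)
    (i j : Fin 3) (hij : i ≠ j)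
    (A B : V →ₗ[ℝ] V →ₗ[ℝ] V →ₗ[ℝ] ℝ)
    (hA : TorsionClass V i A) (hB : TorsionClass V j B) :
    ∑ k, ∑ l, ∑ r, A (b k) (b l) (b r) * B (b k) (b l) (b r) = 0 := by
  have hswap : ∀ (C D : V →ₗ[ℝ] V →ₗ[ℝ] V →ₗ[ℝ] ℝ),
      (∑ k, ∑ l, ∑ r, C (b k) (b l) (b r) * D (b k) (b l) (b r))
        = ∑ k, ∑ l, ∑ r, D (b k) (b l) (b r) * C (b k) (b l) (b r) := fun C D =>
    Finset.sum_congr rfl fun k _ => Finset.sum_congr rfl fun l _ =>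
      Finset.sum_congr rfl fun r _ => mul_comm _ _
  fin_cases i <;> fin_cases j <;>
    simp only [TorsionClass, Matrix.cons_val_zero, Matrix.cons_val_one, Matrix.head_cons,
      Fin.mk_zero, Fin.mk_one, Matrix.cons_val_two, Matrix.tail_cons] at hA hB <;>
    first
      | exact absurd rfl hij
      | skip
  · obtain ⟨_, v, hv⟩ := hA
    exact ortho12 b A B v hv hB.1 hB.2
  · obtain ⟨_, v, hv⟩ := hA
    exact ortho13 b A B v hv hB.1 hB.2.2
  · obtain ⟨_, v, hv⟩ := hB
    rw [hswap A B]
    exact ortho12 b B A v hv hA.1 hA.2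
  · exact ortho23 b A B hA.1 hA.2 hB.2.1
  · obtain ⟨_, v, hv⟩ := hB
    rw [hswap A B]
    exact ortho13 b B A v hv hA.1 hA.2.2
  · rw [hswap A B]
    exact ortho23 b B A hB.1 hB.2 hA.2.1
end

section
/- (Cartan, 1924; two-dimensional case.) Let V be a real inner product space with dim V = 2. Then 𝒯(V) = 𝒯₁(V); that is, for every trilinear form A : V×V×V → ℝ satisfying A(X,Y,Z) = −A(X,Z,Y) for all X,Y,Z ∈ V there exists a vector v ∈ V such that A(X,Y,Z) = ⟨X,Y⟩⟨v,Z⟩ − ⟨X,Z⟩⟨v,Y⟩ for all X,Y,Z ∈ V. -/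
open scoped RealInnerProductSpace

/-!
Orient `V` and let `ω` be its area form and `J` the rotation by a right angle. In dimension two
every alternating bilinear form is a multiple of `ω`, so `A X = f X • ω` for a linear form `f`.
The vectorial tensor of `v` is alternating in its last two slots as well, and comparing
coefficients gives `⟪X, Y⟫ * ⟪v, Z⟫ - ⟪X, Z⟫ * ⟪v, Y⟫ = ω Y Z * ω X v`. Since `ω X (J w) = ⟪X, w⟫`,
the vector `v = J w` with `w` the Riesz representative of `f` does the job.
-/

namespace Orientation

open Module

variable {E : Type*} [NormedAddCommGroup E] [InnerProductSpace ℝ E] [Fact (finrank ℝ E = 2)]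
  (o : Orientation ℝ E (Fin 2))

local notation "ω" => o.areaForm
local notation "J" => o.rightAngleRotation

theorem norm_sq_smul_eq_smul_areaForm_of_isAlt {B : E →ₗ[ℝ] E →ₗ[ℝ] ℝ} (hB : B.IsAlt) (a : E) :
    ‖a‖ ^ 2 • B = B a (J a) • ω := by
  by_cases ha : a = 0
  · simp [ha]
  apply (o.basisRightAngleRotation a ha).ext
  intro i
  apply (o.basisRightAngleRotation a ha).ext
  intro j
  fin_cases i <;> fin_cases j <;> simp [hB.self_eq_zero, ← hB.neg a, mul_comm]

theorem inner_mul_inner_sub_inner_mul_inner (x v y z : E) :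
    ⟪x, y⟫ * ⟪v, z⟫ - ⟪x, z⟫ * ⟪v, y⟫ = ω y z * ω x v := by
  by_cases hx : x = 0
  · simp [hx]
  let P := (LinearMap.mul ℝ ℝ).compl₁₂ (innerₛₗ ℝ x) (innerₛₗ ℝ v)
  have hB : (P - P.flip).IsAlt := fun y => by simp [P]
  have h := congr($(o.norm_sq_smul_eq_smul_areaForm_of_isAlt hB x) y z)
  simp only [P, LinearMap.smul_apply, LinearMap.sub_apply, LinearMap.flip_apply,
    LinearMap.compl₁₂_apply, innerₛₗ_apply_apply, LinearMap.mul_apply', smul_eq_mul,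
    real_inner_self_eq_norm_sq, inner_rightAngleRotation_right, areaForm_apply_self,
    o.areaForm_swap v x] at h
  refine mul_left_cancel₀ (pow_ne_zero 2 (norm_ne_zero_iff.mpr hx)) ?_
  linear_combination h

end Orientation

/-- Cartan (1924), two-dimensional case: if `dim V = 2`, then `𝒯(V) = 𝒯₁(V)`, i.e.
every trilinear form that is antisymmetric in its last two arguments is a vectorial
torsion tensor. -/
theorem cartan_dim_two
    {V : Type*} [NormedAddCommGroup V] [InnerProductSpace ℝ V] [FiniteDimensional ℝ V]
    (hdim : Module.finrank ℝ V = 2)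
    (A : V →ₗ[ℝ] V →ₗ[ℝ] V →ₗ[ℝ] ℝ)
    (hA : ∀ X Y Z : V, A X Y Z = - A X Z Y) :
    ∃ v : V, ∀ X Y Z : V, A X Y Z = ⟪X, Y⟫ * ⟪v, Z⟫ - ⟪X, Z⟫ * ⟪v, Y⟫ := by
  have : Fact (Module.finrank ℝ V = 2) := ⟨hdim⟩
  have : Nontrivial V := Module.nontrivial_of_finrank_eq_succ hdim
  let o : Orientation ℝ V (Fin 2) := (Module.finBasisOfFinrankEq ℝ V hdim).orientation
  obtain ⟨a, ha⟩ := exists_norm_eq V zero_le_one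
  let f : V →ₗ[ℝ] ℝ := (A.flip a).flip (o.rightAngleRotation a)
  let w := (InnerProductSpace.toDual ℝ V).symm (LinearMap.toContinuousLinearMap f)
  refine ⟨o.rightAngleRotation w, fun X Y Z => ?_⟩
  have hAX : (A X).IsAlt := fun Y => by linarith [hA X Y Y]
  have h := congr($(o.norm_sq_smul_eq_smul_areaForm_of_isAlt hAX a) Y Z)
  rw [ha, one_pow, one_smul] at h
  rw [o.inner_mul_inner_sub_inner_mul_inner, o.areaForm_rightAngleRotation_right,
    real_inner_comm, InnerProductSpace.toDual_symm_apply, h]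
  simp [f, mul_comm]
end

section
/- (Bochner formula for harmonic maps with torsion; flat-target, parallel-torsion model.) Let E be a finite-dimensional real inner product space, let A : E×E → E be a bilinear map satisfying ⟨A(X,Y),Z⟩ = −⟨Y, A(X,Z)⟩ for all X,Y,Z ∈ E, and let φ : ℝ^m → E be a smooth solution of the harmonic map with torsion equation Δφ + ∑ᵢ A(∂ᵢφ, ∂ᵢφ) = 0, where Δφ = ∑ᵢ ∂ᵢ∂ᵢφ. Then the energy density e(φ) = ½ ∑ᵢ ‖∂ᵢφ‖² satisfies Δ(½ ∑ᵢ ‖∂ᵢφ‖²) = ∑_{i,j} ‖∂ᵢ∂ⱼφ‖² − ∑_{i,j} ⟨A(∂ᵢφ, ∂ⱼ∂ᵢφ), ∂ⱼφ⟩ at every point of ℝ^m. -/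
open scoped RealInnerProductSpace BigOperators

/-- The partial derivative in the `i`-th coordinate direction of a map defined on
Euclidean space `ℝ^m`. -/
noncomputable def pd {m : ℕ} {F : Type*} [NormedAddCommGroup F] [NormedSpace ℝ F]
    (f : EuclideanSpace ℝ (Fin m) → F) (i : Fin m) (x : EuclideanSpace ℝ (Fin m)) : F :=
  fderiv ℝ f x (EuclideanSpace.single i 1)

section aux

variable {m : ℕ} {F : Type*} [NormedAddCommGroup F] [NormedSpace ℝ F]

lemma contDiff_pd {f : EuclideanSpace ℝ (Fin m) → F} (hf : ContDiff ℝ (⊤ : ℕ∞) f) (i : Fin m) :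
    ContDiff ℝ (⊤ : ℕ∞) (pd f i) :=
  (hf.fderiv_right (by simp)).clm_apply contDiff_const

lemma pd_sum {ι : Type*} (s : Finset ι) {f : ι → EuclideanSpace ℝ (Fin m) → F}
    {x : EuclideanSpace ℝ (Fin m)}
    (hf : ∀ j ∈ s, DifferentiableAt ℝ (f j) x) (i : Fin m) :
    pd (fun y => ∑ j ∈ s, f j y) i x = ∑ j ∈ s, pd (f j) i x := by
  unfold pd
  rw [fderiv_fun_sum hf]
  simp

lemma pd_add {f g : EuclideanSpace ℝ (Fin m) → F} {x : EuclideanSpace ℝ (Fin m)}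
    (hf : DifferentiableAt ℝ f x) (hg : DifferentiableAt ℝ g x) (i : Fin m) :
    pd (fun y => f y + g y) i x = pd f i x + pd g i x := by
  unfold pd
  rw [fderiv_fun_add hf hg]
  simp

lemma pd_const_mul {f : EuclideanSpace ℝ (Fin m) → ℝ} {x : EuclideanSpace ℝ (Fin m)}
    (hf : DifferentiableAt ℝ f x) (c : ℝ) (i : Fin m) :
    pd (fun y => c * f y) i x = c * pd f i x := by
  unfold pd
  rw [fderiv_const_mul hf]
  simp

lemma pd_inner {E : Type*} [NormedAddCommGroup E] [InnerProductSpace ℝ E]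
    {u v : EuclideanSpace ℝ (Fin m) → E} {x : EuclideanSpace ℝ (Fin m)}
    (hu : DifferentiableAt ℝ u x) (hv : DifferentiableAt ℝ v x) (i : Fin m) :
    pd (fun y => ⟪u y, v y⟫) i x = ⟪pd u i x, v x⟫ + ⟪u x, pd v i x⟫ := by
  unfold pd
  rw [fderiv_inner_apply ℝ hu hv]
  rw [add_comm]

lemma pd_comm {f : EuclideanSpace ℝ (Fin m) → F} (hf : ContDiff ℝ (⊤ : ℕ∞) f) (i j : Fin m)
    (x : EuclideanSpace ℝ (Fin m)) :
    pd (pd f i) j x = pd (pd f j) i x := by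
  have hd : Differentiable ℝ (fderiv ℝ f) := (hf.fderiv_right (m := 1) (by exact WithTop.coe_le_coe.mpr (le_top : ((1 + 1 : ℕ) : ℕ∞) ≤ ⊤))).differentiable one_ne_zero
  have key : ∀ a b : Fin m, pd (pd f a) b x
      = fderiv ℝ (fderiv ℝ f) x (EuclideanSpace.single b 1) (EuclideanSpace.single a 1) := by
    intro a b
    show fderiv ℝ (fun y => fderiv ℝ f y (EuclideanSpace.single a 1)) x (EuclideanSpace.single b 1) = _
    rw [fderiv_clm_apply (hd x) (differentiableAt_const _)]
    simp
  rw [key i j, key j i]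
  exact (hf.contDiffAt.isSymmSndFDerivAt (by rw [minSmoothness_of_isRCLikeNormedField]; exact WithTop.coe_le_coe.mpr (le_top : (2 : ℕ∞) ≤ ⊤))) _ _

end aux

section bilin

variable {m : ℕ} {E : Type*} [NormedAddCommGroup E] [NormedSpace ℝ E] [FiniteDimensional ℝ E]

noncomputable def bilinCLM (A : E →ₗ[ℝ] E →ₗ[ℝ] E) : E →L[ℝ] E →L[ℝ] E :=
  LinearMap.toContinuousLinearMap
    ((LinearMap.toContinuousLinearMap :
      (E →ₗ[ℝ] E) ≃ₗ[ℝ] (E →L[ℝ] E)).toLinearMap.comp A)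

@[simp] lemma bilinCLM_apply (A : E →ₗ[ℝ] E →ₗ[ℝ] E) (u v : E) :
    bilinCLM A u v = A u v := rfl

lemma differentiableAt_bilin (A : E →ₗ[ℝ] E →ₗ[ℝ] E)
    {u v : EuclideanSpace ℝ (Fin m) → E} {x : EuclideanSpace ℝ (Fin m)}
    (hu : DifferentiableAt ℝ u x) (hv : DifferentiableAt ℝ v x) :
    DifferentiableAt ℝ (fun y => A (u y) (v y)) x := by
  have : (fun y => A (u y) (v y)) = fun y => bilinCLM A (u y) (v y) := rfl
  rw [this]
  exact DifferentiableAt.clm_apply ((bilinCLM A).differentiableAt.comp x hu) hv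

lemma pd_bilin (A : E →ₗ[ℝ] E →ₗ[ℝ] E)
    {u v : EuclideanSpace ℝ (Fin m) → E} {x : EuclideanSpace ℝ (Fin m)}
    (hu : DifferentiableAt ℝ u x) (hv : DifferentiableAt ℝ v x) (i : Fin m) :
    pd (fun y => A (u y) (v y)) i x = A (pd u i x) (v x) + A (u x) (pd v i x) := by
  have h : (fun y => A (u y) (v y)) = fun y => bilinCLM A (u y) (v y) := rfl
  have hc : DifferentiableAt ℝ (fun y => bilinCLM A (u y)) x :=
    (bilinCLM A).differentiableAt.comp x hu
  rw [h]
  unfold pd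
  rw [fderiv_clm_apply hc hv]
  have hfc : fderiv ℝ (fun y => bilinCLM A (u y)) x = (bilinCLM A).comp (fderiv ℝ u x) :=
    (((bilinCLM A).hasFDerivAt).comp x hu.hasFDerivAt).fderiv
  rw [hfc]
  simp
  rw [add_comm]

end bilin

/-- Bochner formula for harmonic maps with torsion (flat-target, parallel-torsion
model): if `φ : ℝ^m → E` is smooth and solves `Δφ + ∑ᵢ A(∂ᵢφ, ∂ᵢφ) = 0` with a
skew-adjoint torsion endomorphism `A`, then
`Δ(½ ∑ᵢ ‖∂ᵢφ‖²) = ∑_{i,j} ‖∂ᵢ∂ⱼφ‖² − ∑_{i,j} ⟨A(∂ᵢφ, ∂ⱼ∂ᵢφ), ∂ⱼφ⟩`. -/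
theorem bochner_formula_with_torsion
    {m : ℕ} {E : Type*} [NormedAddCommGroup E] [InnerProductSpace ℝ E]
    [FiniteDimensional ℝ E]
    (A : E →ₗ[ℝ] E →ₗ[ℝ] E)
    (hA : ∀ X Y Z : E, ⟪A X Y, Z⟫ = - ⟪Y, A X Z⟫)
    (φ : EuclideanSpace ℝ (Fin m) → E)
    (hφ : ContDiff ℝ (⊤ : ℕ∞) φ)
    (heq : ∀ x, ∑ i, pd (pd φ i) i x + ∑ i, A (pd φ i x) (pd φ i x) = 0) :
    ∀ x, ∑ i, pd (pd (fun y => (1 / 2 : ℝ) * ∑ j, ‖pd φ j y‖ ^ 2) i) i x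
        = ∑ i, ∑ j, ‖pd (pd φ j) i x‖ ^ 2
          - ∑ i, ∑ j, ⟪A (pd φ i x) (pd (pd φ i) j x), pd φ j x⟫ := by
  intro x
  have hφ1 : ∀ j, ContDiff ℝ (⊤ : ℕ∞) (pd φ j) := fun j => contDiff_pd hφ j
  have hφ2 : ∀ j i, ContDiff ℝ (⊤ : ℕ∞) (pd (pd φ j) i) := fun j i => contDiff_pd (hφ1 j) i
  have d1 : ∀ j y, DifferentiableAt ℝ (pd φ j) y := fun j y =>
    (hφ1 j).differentiable (by simp) y
  have d2 : ∀ j i y, DifferentiableAt ℝ (pd (pd φ j) i) y := fun j i y =>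
    (hφ2 j i).differentiable (by simp) y
  -- first derivative of the energy density
  have hg_eq : ∀ (i : Fin m) (y : EuclideanSpace ℝ (Fin m)),
      pd (fun y => (1 / 2 : ℝ) * ∑ j, ‖pd φ j y‖ ^ 2) i y
        = ∑ j, ⟪pd (pd φ j) i y, pd φ j y⟫ := by
    intro i y
    have hfun : (fun y => (1 / 2 : ℝ) * ∑ j, ‖pd φ j y‖ ^ 2)
        = fun y => (1 / 2 : ℝ) * ∑ j, ⟪pd φ j y, pd φ j y⟫ := by
      funext z
      congr 1
      exact Finset.sum_congr rfl fun j _ => (real_inner_self_eq_norm_sq _).symm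
    rw [hfun, pd_const_mul (DifferentiableAt.fun_sum fun j _ => (d1 j y).inner ℝ (d1 j y)) _ i,
      pd_sum _ (fun j _ => (d1 j y).inner ℝ (d1 j y)) i, Finset.mul_sum]
    refine Finset.sum_congr rfl fun j _ => ?_
    rw [pd_inner (d1 j y) (d1 j y) i, real_inner_comm (pd φ j y) (pd (pd φ j) i y)]
    ring
  -- second derivative of the energy density
  have hgg : ∀ i : Fin m,
      pd (pd (fun y => (1 / 2 : ℝ) * ∑ j, ‖pd φ j y‖ ^ 2) i) i x
        = ∑ j, (⟪pd (pd (pd φ j) i) i x, pd φ j x⟫ + ⟪pd (pd φ j) i x, pd (pd φ j) i x⟫) := by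
    intro i
    have hfun : pd (fun y => (1 / 2 : ℝ) * ∑ j, ‖pd φ j y‖ ^ 2) i
        = fun y => ∑ j, ⟪pd (pd φ j) i y, pd φ j y⟫ := funext (hg_eq i)
    rw [hfun, pd_sum _ (fun j _ => (d2 j i x).inner ℝ (d1 j x)) i]
    exact Finset.sum_congr rfl fun j _ => pd_inner (d2 j i x) (d1 j x) i
  -- differentiating the harmonic map equation
  have hkey : ∀ k : Fin m, ∑ i, pd (pd (pd φ i) i) k x
      = - ∑ i, (A (pd (pd φ i) k x) (pd φ i x) + A (pd φ i x) (pd (pd φ i) k x)) := by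
    intro k
    have hzero : pd (fun y => ∑ i, pd (pd φ i) i y + ∑ i, A (pd φ i y) (pd φ i y)) k x = 0 := by
      have h0 : (fun y => ∑ i, pd (pd φ i) i y + ∑ i, A (pd φ i y) (pd φ i y))
          = fun _ => (0 : E) := funext heq
      rw [h0]
      simp [pd]
    have hexp : pd (fun y => ∑ i, pd (pd φ i) i y + ∑ i, A (pd φ i y) (pd φ i y)) k x
        = ∑ i, pd (pd (pd φ i) i) k x
          + ∑ i, (A (pd (pd φ i) k x) (pd φ i x) + A (pd φ i x) (pd (pd φ i) k x)) := by
      rw [pd_add (DifferentiableAt.fun_sum fun i _ => d2 i i x)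
            (DifferentiableAt.fun_sum fun i _ => differentiableAt_bilin A (d1 i x) (d1 i x)) k,
          pd_sum _ (fun i _ => d2 i i x) k,
          pd_sum _ (fun i _ => differentiableAt_bilin A (d1 i x) (d1 i x)) k]
      congr 1
      exact Finset.sum_congr rfl fun i _ => pd_bilin A (d1 i x) (d1 i x) k
    rw [hexp] at hzero
    exact eq_neg_of_add_eq_zero_left hzero
  -- commuting partial derivatives
  have hswap2' : ∀ i j, pd (pd φ i) j = pd (pd φ j) i := fun i j =>
    funext fun y => pd_comm hφ i j y
  have htriple : ∀ i j, pd (pd (pd φ j) i) i x = pd (pd (pd φ i) i) j x := by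
    intro i j
    rw [hswap2' j i]
    exact pd_comm (hφ1 i) j i x
  -- the skew-symmetric sum vanishes
  have hS : ∑ i : Fin m, ∑ j : Fin m,
      (⟪A (pd (pd φ i) j x) (pd φ i x), pd φ j x⟫ : ℝ) = 0 := by
    have hsym : ∀ i j : Fin m, (⟪A (pd (pd φ i) j x) (pd φ i x), pd φ j x⟫ : ℝ)
        = - ⟪A (pd (pd φ j) i x) (pd φ j x), pd φ i x⟫ := by
      intro i j
      rw [hA, real_inner_comm, hswap2' i j]
    have h2 : (∑ i : Fin m, ∑ j : Fin m,
        (⟪A (pd (pd φ i) j x) (pd φ i x), pd φ j x⟫ : ℝ))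
        = - ∑ i : Fin m, ∑ j : Fin m,
        (⟪A (pd (pd φ i) j x) (pd φ i x), pd φ j x⟫ : ℝ) := by
      conv_lhs =>
        rw [Finset.sum_congr rfl fun i _ => Finset.sum_congr rfl fun j _ => hsym i j]
      rw [Finset.sum_comm]
      simp
    linarith
  -- assemble
  simp only [hgg]
  have split : ∑ i : Fin m, ∑ j : Fin m,
      ((⟪pd (pd (pd φ j) i) i x, pd φ j x⟫ : ℝ) + ⟪pd (pd φ j) i x, pd (pd φ j) i x⟫)
      = (∑ i : Fin m, ∑ j : Fin m, (⟪pd (pd (pd φ j) i) i x, pd φ j x⟫ : ℝ))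
        + ∑ i : Fin m, ∑ j : Fin m, ‖pd (pd φ j) i x‖ ^ 2 := by
    simp [Finset.sum_add_distrib, real_inner_self_eq_norm_sq]
  rw [split]
  have hmain : (∑ i : Fin m, ∑ j : Fin m, (⟪pd (pd (pd φ j) i) i x, pd φ j x⟫ : ℝ))
      = - ∑ i : Fin m, ∑ j : Fin m, (⟪A (pd φ i x) (pd (pd φ i) j x), pd φ j x⟫ : ℝ) := by
    calc (∑ i : Fin m, ∑ j : Fin m, (⟪pd (pd (pd φ j) i) i x, pd φ j x⟫ : ℝ))
        = ∑ j : Fin m, ∑ i : Fin m, (⟪pd (pd (pd φ i) i) j x, pd φ j x⟫ : ℝ) := by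
          rw [Finset.sum_comm]
          exact Finset.sum_congr rfl fun j _ => Finset.sum_congr rfl fun i _ => by
            rw [htriple i j]
      _ = ∑ j : Fin m, (⟪∑ i : Fin m, pd (pd (pd φ i) i) j x, pd φ j x⟫ : ℝ) :=
          Finset.sum_congr rfl fun j _ => (sum_inner (𝕜 := ℝ) Finset.univ _ (pd φ j x)).symm
      _ = ∑ j : Fin m, (⟪-∑ i : Fin m,
            (A (pd (pd φ i) j x) (pd φ i x) + A (pd φ i x) (pd (pd φ i) j x)),
            pd φ j x⟫ : ℝ) :=
          Finset.sum_congr rfl fun j _ => by rw [hkey j]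
      _ = - ((∑ j : Fin m, ∑ i : Fin m, (⟪A (pd (pd φ i) j x) (pd φ i x), pd φ j x⟫ : ℝ))
            + ∑ j : Fin m, ∑ i : Fin m, (⟪A (pd φ i x) (pd (pd φ i) j x), pd φ j x⟫ : ℝ)) := by
          simp [inner_neg_left, sum_inner, inner_add_left, Finset.sum_add_distrib]
      _ = - ∑ i : Fin m, ∑ j : Fin m, (⟪A (pd φ i x) (pd (pd φ i) j x), pd φ j x⟫ : ℝ) := by
          rw [Finset.sum_comm (f := fun j i => (⟪A (pd (pd φ i) j x) (pd φ i x), pd φ j x⟫ : ℝ))]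
          rw [hS]
          rw [Finset.sum_comm (f := fun j i => (⟪A (pd φ i x) (pd (pd φ i) j x), pd φ j x⟫ : ℝ))]
          ring
  rw [hmain]
  ring
end
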